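/- Let l be an even natural number and ω a real number with ω ≠ 0. Then the limit as ε → 0⁺ of ∫₀¹ u^{ε − 1 + iω} P_l(u) du exists and equals (1/(iω)) · ∏_{k=1}^{l/2} (ω + (2k−1)i)/(ω − 2ki). -/

import Mathlib

/-!
For `re w > 0` and a real polynomial `q = ∑ qₖ Xᵏ`, termwise integration gives
`∫₀¹ u^(w-1) q(u) du = M w q := ∑ qₖ / (w + k)`, a rational function of `w`, continuous at every
`w ∉ -ℕ`; so the limit is `M (iω) P_l`. The identity `w M w q + M w (X q') = q(1)` (integration
by parts), applied to the Legendre relation `X (P_{n+2} - P_n)' = (n+2) P_{n+2} + (n+1) P_n`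
together with `P_n(1) = 1`, gives `(w + n + 2) M w P_{n+2} = (w - n - 1) M w P_n`, which
telescopes from `M w P₀ = 1/w` to the product.
-/

open MeasureTheory Filter

noncomputable section

/-- The Legendre polynomial of degree `l`, via Rodrigues' formula. -/
def legendre (l : ℕ) (u : ℝ) : ℝ :=
  (1 / (2 ^ l * (Nat.factorial l : ℝ))) *
    iteratedDeriv l (fun x : ℝ => (x ^ 2 - 1) ^ l) u

open Polynomial Set

def rodrigues (n : ℕ) : ℝ[X] := derivative^[n] ((X ^ 2 - 1) ^ n)

lemma derivative_X_sq_sub_one_pow_succ (n : ℕ) :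
    derivative ((X ^ 2 - 1 : ℝ[X]) ^ (n + 1)) =
      (2 * ((n : ℝ[X]) + 1)) * ((X ^ 2 - 1) ^ n * X) := by
  rw [derivative_pow_succ]
  simp only [derivative_sub, derivative_X_sq, derivative_one, sub_zero, C_add, C_1, map_natCast,
    map_ofNat]
  ring

lemma derivative_rodrigues_succ (n : ℕ) :
    derivative (rodrigues (n + 1)) =
      2 * ((n : ℝ[X]) + 1) * (X * derivative (rodrigues n) + ((n : ℝ[X]) + 1) * rodrigues n) := by
  simp only [rodrigues, ← Function.iterate_succ_apply' derivative]
  rw [Function.iterate_succ_apply, derivative_X_sq_sub_one_pow_succ,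
    show (2 * ((n : ℝ[X]) + 1)) = ((2 * (n + 1) : ℕ) : ℝ[X]) by push_cast; ring,
    iterate_derivative_natCast_mul, iterate_derivative_mul_X, Nat.add_sub_cancel, nsmul_eq_mul]
  push_cast
  ring

lemma X_mul_derivative_rodrigues_succ (n : ℕ) :
    X * derivative (rodrigues (n + 1)) =
      ((n : ℝ[X]) + 1) * rodrigues (n + 1) + 2 * ((n : ℝ[X]) + 1) * derivative (rodrigues n) := by
  have hd : derivative ((X ^ 2 - 1 : ℝ[X]) ^ (n + 1) * X) =
      ((2 * n + 3 : ℕ) : ℝ[X]) * (X ^ 2 - 1) ^ (n + 1) +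
        ((2 * (n + 1) : ℕ) : ℝ[X]) * (X ^ 2 - 1) ^ n := by
    rw [derivative_mul, derivative_X_sq_sub_one_pow_succ, derivative_X]
    push_cast
    ring
  have h := congrArg (derivative^[n + 1]) hd
  rw [← Function.iterate_succ_apply, iterate_derivative_mul_X, iterate_map_add,
    iterate_derivative_natCast_mul, iterate_derivative_natCast_mul, Nat.succ_sub_one,
    nsmul_eq_mul] at h
  simp only [rodrigues, ← Function.iterate_succ_apply' derivative] at h ⊢
  push_cast at h ⊢
  linear_combination h

def legendrePoly (n : ℕ) : ℝ[X] := C ((2 ^ n * n.factorial : ℝ)⁻¹) * rodrigues n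

lemma C_inv_mul_two_mul_succ (n : ℕ) :
    C ((2 ^ (n + 1) * (n + 1).factorial : ℝ)⁻¹) * (2 * ((n : ℝ[X]) + 1)) =
      C ((2 ^ n * n.factorial : ℝ)⁻¹) := by
  rw [show (2 * ((n : ℝ[X]) + 1)) = C (2 * ((n : ℝ) + 1)) by
      rw [C_mul, C_add, C_1, map_natCast, map_ofNat], ← C_mul, Nat.factorial_succ]
  congr 1
  push_cast
  field_simp
  ring

lemma derivative_legendrePoly_succ (n : ℕ) :
    derivative (legendrePoly (n + 1)) =
      X * derivative (legendrePoly n) + ((n : ℝ[X]) + 1) * legendrePoly n := by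
  simp only [legendrePoly, derivative_C_mul, derivative_rodrigues_succ]
  linear_combination (X * derivative (rodrigues n) + ((n : ℝ[X]) + 1) * rodrigues n) *
    C_inv_mul_two_mul_succ n

lemma X_mul_derivative_legendrePoly_succ (n : ℕ) :
    X * derivative (legendrePoly (n + 1)) =
      ((n : ℝ[X]) + 1) * legendrePoly (n + 1) + derivative (legendrePoly n) := by
  simp only [legendrePoly, derivative_C_mul]
  linear_combination C ((2 ^ (n + 1) * (n + 1).factorial : ℝ)⁻¹) *
    X_mul_derivative_rodrigues_succ n + derivative (rodrigues n) * C_inv_mul_two_mul_succ n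

lemma legendrePoly_zero : legendrePoly 0 = 1 := by
  simp [legendrePoly, rodrigues]

lemma eval_one_legendrePoly (n : ℕ) : (legendrePoly n).eval 1 = 1 := by
  induction n with
  | zero => simp [legendrePoly_zero]
  | succ n ih =>
    have hA := congrArg (eval 1) (derivative_legendrePoly_succ n)
    have hB := congrArg (eval 1) (X_mul_derivative_legendrePoly_succ n)
    simp only [eval_add, eval_mul, eval_X, eval_natCast, eval_one, one_mul, ih] at hA hB
    have hn : (n : ℝ) + 1 ≠ 0 := n.cast_add_one_ne_zero
    exact (mul_left_cancel₀ hn (by linear_combination hA - hB)).trans (mul_one _)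

lemma X_mul_derivative_legendrePoly_add_two_sub (n : ℕ) :
    X * derivative (legendrePoly (n + 2) - legendrePoly n) =
      ((n : ℝ) + 2) • legendrePoly (n + 2) + ((n : ℝ) + 1) • legendrePoly n := by
  simp only [smul_eq_C_mul, map_add, map_natCast, map_ofNat, map_one, derivative_sub]
  have h := X_mul_derivative_legendrePoly_succ (n + 1)
  push_cast at h ⊢
  linear_combination h + derivative_legendrePoly_succ n

lemma iteratedDeriv_eval {𝕜 : Type*} [NontriviallyNormedField 𝕜] (n : ℕ) (p : 𝕜[X]) :
    iteratedDeriv n (fun x : 𝕜 => p.eval x) = fun x => (derivative^[n] p).eval x := by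
  induction n generalizing p with
  | zero => simp
  | succ n ih =>
    rw [iteratedDeriv_succ', funext fun x => p.deriv (x := x), ih, Function.iterate_succ_apply]

lemma legendre_eq_eval (n : ℕ) (u : ℝ) : legendre n u = (legendrePoly n).eval u := by
  have h := congrFun (iteratedDeriv_eval n ((X ^ 2 - 1) ^ n)) u
  simp only [eval_pow, eval_sub, eval_X, eval_one] at h
  simp [legendre, legendrePoly, rodrigues, h]

/-- `∑ qₖ / (w + k)`, which is `∫₀¹ u^(w-1) q(u) du` when `re w > 0`
(`integral_cexp_mul_log_mul_eval`) and continues it to all `w ∉ -ℕ`. -/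
def mellinPoly (w : ℂ) : ℝ[X] →ₗ[ℝ] ℂ :=
  lsum fun k => LinearMap.toSpanSingleton ℝ ℂ (w + k)⁻¹

lemma mellinPoly_apply (w : ℂ) (q : ℝ[X]) :
    mellinPoly w q = ∑ k ∈ q.support, (q.coeff k : ℂ) * (w + k)⁻¹ := by
  simp [mellinPoly, Polynomial.sum_def, Complex.real_smul]

lemma mellinPoly_monomial (w : ℂ) (k : ℕ) (a : ℝ) :
    mellinPoly w (monomial k a) = a * (w + k)⁻¹ := by
  simp [mellinPoly, Complex.real_smul]

lemma mul_mellinPoly_add_mellinPoly_X_mul_derivative {w : ℂ} (hw : ∀ k : ℕ, w + k ≠ 0)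
    (q : ℝ[X]) : w * mellinPoly w q + mellinPoly w (X * derivative q) = q.eval 1 := by
  induction q using Polynomial.induction_on' with
  | add p q hp hq =>
    simp only [map_add, mul_add, eval_add, Complex.ofReal_add]
    linear_combination hp + hq
  | monomial k a =>
    have hXd : X * derivative (monomial k a) = monomial k (a * k) := by
      cases k with
      | zero => simp
      | succ k => rw [derivative_monomial, X_mul_monomial, Nat.add_sub_cancel]
    rw [hXd, mellinPoly_monomial, mellinPoly_monomial, eval_monomial, one_pow, mul_one]
    field_simp [hw k]
    push_cast
    ring

lemma continuousAt_mellinPoly {w : ℂ} (hw : ∀ k : ℕ, w + k ≠ 0) (q : ℝ[X]) :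
    ContinuousAt (fun z => mellinPoly z q) w := by
  simp only [mellinPoly_apply]
  fun_prop (disch := exact hw _)

lemma integrableOn_Ioo_cpow {s : ℂ} (hs : -1 < s.re) :
    IntegrableOn (fun u : ℝ => (u : ℂ) ^ s) (Ioo 0 1) :=
  ((intervalIntegral.intervalIntegrable_cpow' hs).1).mono_set Ioo_subset_Ioc_self

lemma integral_Ioo_cpow {s : ℂ} (hs : -1 < s.re) :
    ∫ u in Ioo (0 : ℝ) 1, (u : ℂ) ^ s = (s + 1)⁻¹ := by
  have hs1 : s + 1 ≠ 0 := fun h => by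
    have := congrArg Complex.re h
    simp only [Complex.add_re, Complex.one_re, Complex.zero_re] at this
    linarith
  rw [← integral_Ioc_eq_integral_Ioo, ← intervalIntegral.integral_of_le zero_le_one,
    integral_cpow (Or.inl hs)]
  simp [Complex.zero_cpow hs1]

lemma cexp_mul_log_mul_pow {u : ℝ} (hu : 0 < u) (w : ℂ) (k : ℕ) :
    Complex.exp ((w - 1) * Real.log u) * (u : ℂ) ^ k = (u : ℂ) ^ (w - 1 + k) := by
  have hu0 : (u : ℂ) ≠ 0 := Complex.ofReal_ne_zero.2 hu.ne'
  rw [Complex.cpow_add _ _ hu0, Complex.cpow_natCast, Complex.cpow_def_of_ne_zero hu0,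
    ← Complex.ofReal_log hu.le, mul_comm (Real.log u : ℂ)]

lemma integral_cexp_mul_log_mul_eval {w : ℂ} (hw : 0 < w.re) (q : ℝ[X]) :
    ∫ u in Ioo (0 : ℝ) 1, Complex.exp ((w - 1) * Real.log u) * ((q.eval u : ℝ) : ℂ) =
      mellinPoly w q := by
  have hre (k : ℕ) : -1 < (w - 1 + k).re := by
    simp only [Complex.add_re, Complex.sub_re, Complex.one_re, Complex.natCast_re]
    linarith [k.cast_nonneg (α := ℝ)]
  have hpt : EqOn (fun u : ℝ => Complex.exp ((w - 1) * Real.log u) * ((q.eval u : ℝ) : ℂ))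
      (fun u => ∑ k ∈ q.support, (q.coeff k : ℂ) * (u : ℂ) ^ (w - 1 + k)) (Ioo 0 1) := by
    intro u hu
    simp only [eval_eq_sum, Polynomial.sum_def, Complex.ofReal_sum, Complex.ofReal_mul,
      Complex.ofReal_pow, Finset.mul_sum, ← cexp_mul_log_mul_pow hu.1]
    exact Finset.sum_congr rfl fun k _ => by ring
  rw [setIntegral_congr_fun measurableSet_Ioo hpt,
    integral_finsetSum _ fun k _ => (integrableOn_Ioo_cpow (hre k)).const_mul _,
    mellinPoly_apply]
  refine Finset.sum_congr rfl fun k _ => ?_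
  rw [integral_const_mul, integral_Ioo_cpow (hre k)]
  ring_nf

lemma mellinPoly_legendrePoly_zero {w : ℂ} (hw : ∀ k : ℕ, w + k ≠ 0) :
    mellinPoly w (legendrePoly 0) = w⁻¹ := by
  have h := mul_mellinPoly_add_mellinPoly_X_mul_derivative hw 1
  rw [derivative_one, mul_zero, map_zero, add_zero, eval_one, Complex.ofReal_one] at h
  rw [legendrePoly_zero, eq_inv_of_mul_eq_one_right h]

lemma mellinPoly_legendrePoly_add_two {w : ℂ} (hw : ∀ k : ℕ, w + k ≠ 0) (n : ℕ) :
    (w + (n + 2)) * mellinPoly w (legendrePoly (n + 2)) =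
      (w - (n + 1)) * mellinPoly w (legendrePoly n) := by
  have h := mul_mellinPoly_add_mellinPoly_X_mul_derivative hw
    (legendrePoly (n + 2) - legendrePoly n)
  rw [X_mul_derivative_legendrePoly_add_two_sub, eval_sub, eval_one_legendrePoly,
    eval_one_legendrePoly, sub_self, Complex.ofReal_zero, map_sub, map_add, map_smul,
    map_smul, Complex.real_smul, Complex.real_smul] at h
  push_cast at h
  linear_combination h

lemma mellinPoly_legendrePoly_two_mul {w : ℂ} (hw : ∀ k : ℕ, w + k ≠ 0) (m : ℕ) :
    mellinPoly w (legendrePoly (2 * m)) =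
      w⁻¹ * ∏ k ∈ Finset.Icc 1 m, (w - (2 * k - 1)) / (w + 2 * k) := by
  induction m with
  | zero => simp [mellinPoly_legendrePoly_zero hw]
  | succ m ih =>
    have h := mellinPoly_legendrePoly_add_two hw (2 * m)
    rw [Finset.prod_Icc_succ_top (Nat.le_add_left 1 m), ← mul_assoc, ← ih, mul_add_one,
      mul_div_assoc', eq_div_iff (by exact_mod_cast hw (2 * m + 2))]
    push_cast at h ⊢
    linear_combination h

theorem stmt5 (l : ℕ) (hl : Even l) (ω : ℝ) (hω : ω ≠ 0) :
    Tendsto (fun ε : ℝ => ∫ u in Set.Ioo (0:ℝ) 1,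
        Complex.exp (((ε : ℂ) - 1 + Complex.I * (ω : ℂ)) * (Real.log u : ℂ)) *
          (legendre l u : ℂ))
      (nhdsWithin 0 (Set.Ioi 0))
      (nhds ((1 / (Complex.I * (ω : ℂ))) *
        ∏ k ∈ Finset.Icc 1 (l / 2),
          (((ω : ℂ) + (2 * (k : ℂ) - 1) * Complex.I) /
            ((ω : ℂ) - 2 * (k : ℂ) * Complex.I)))) := by
  obtain ⟨m, rfl⟩ := hl
  rw [← two_mul, Nat.mul_div_cancel_left m two_pos]
  have hw (ε : ℝ) (k : ℕ) : (ε + Complex.I * ω) + k ≠ 0 := fun h => by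
    simpa [hω] using congrArg Complex.im h
  have hw₀ (k : ℕ) : Complex.I * ω + k ≠ 0 := by simpa using hw 0 k
  have hlim : Tendsto (fun ε : ℝ => mellinPoly (ε + Complex.I * ω) (legendrePoly (2 * m)))
      (nhdsWithin 0 (Ioi 0)) (nhds (mellinPoly (Complex.I * ω) (legendrePoly (2 * m)))) := by
    have hc := (continuousAt_mellinPoly hw₀ (legendrePoly (2 * m))).tendsto.comp
      ((Complex.continuous_ofReal.add_const (Complex.I * ω)).tendsto' 0 _ (by simp))
    simpa [Function.comp_def] using hc.mono_left nhdsWithin_le_nhds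
  refine (hlim.congr' ?_).trans_eq ?_
  · filter_upwards [self_mem_nhdsWithin] with ε (hε : 0 < ε)
    rw [← integral_cexp_mul_log_mul_eval (by simpa using hε)]
    simp only [legendre_eq_eval, sub_add_eq_add_sub]
  · rw [mellinPoly_legendrePoly_two_mul hw₀, one_div]
    refine congrArg _ <| congrArg _ (Finset.prod_congr rfl fun k _ => ?_)
    rw [← mul_div_mul_left _ _ (neg_ne_zero.2 Complex.I_ne_zero)]
    congr 1 <;> linear_combination -(ω : ℂ) * Complex.I_sq
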